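/- arXiv:1808.05924 — 4 statements merged into one kernel-verified Lean document; each statement's English description precedes it below -/
import Mathlib

section
/- Let X be a real n×p matrix with rank(X) = p, X† = (XᵀX)⁻¹Xᵀ, S ∈ ℝ^{r×n} with p ≤ r ≤ n, (SX)† the Moore–Penrose inverse of SX, P = X(SX)†S, and P_X = X(XᵀX)⁻¹Xᵀ. Let y ∈ ℝⁿ, β̂ = X†y, and β̃ = (SX)†Sy. If β̂ ≠ 0, then ‖β̃ − β̂‖₂ / ‖β̂‖₂ ≤ κ₂(X) · (‖y‖₂ / (‖X‖₂‖β̂‖₂)) · ‖P − P_X‖₂, where κ₂(X) = ‖X‖₂‖X†‖₂ and ‖·‖₂ denotes the spectral (Euclidean operator) norm for matrices and the Euclidean norm for vectors. If moreover P_X y ≠ 0, then ‖y‖₂/(‖X‖₂‖β̂‖₂) ≤ ‖y‖₂/‖P_X y‖₂, so ‖β̃ − β̂‖₂ / ‖β̂‖₂ ≤ κ₂(X) ‖P − P_X‖₂ · ‖y‖₂/‖P_X y‖₂. -/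
open Matrix

/-- The Euclidean norm of a vector in `Fin k → ℝ`. -/
noncomputable def vecEnorm {k : ℕ} (v : Fin k → ℝ) : ℝ :=
  ‖(WithLp.equiv 2 (Fin k → ℝ)).symm v‖

/-- The spectral (Euclidean operator) norm of a real matrix. -/
noncomputable def specNorm {a b : ℕ} (M : Matrix (Fin a) (Fin b) ℝ) : ℝ :=
  ‖LinearMap.toContinuousLinearMap (Matrix.toEuclideanLin M)‖

/-!
Because `X† = (XᵀX)⁻¹Xᵀ` is a left inverse of `X`, we have `X† P = (SX)† S` and `X† P_X = X†`, hence
`β̃ - β̂ = X† (P - P_X) y`; submultiplicativity of the spectral norm gives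
`‖β̃ - β̂‖ ≤ ‖X†‖ ‖P - P_X‖ ‖y‖`. The second bound is `‖P_X y‖ = ‖X β̂‖ ≤ ‖X‖ ‖β̂‖`.
-/

section Norms

variable {a b k : ℕ}

lemma vecEnorm_nonneg (v : Fin k → ℝ) : 0 ≤ vecEnorm v :=
  norm_nonneg _

lemma vecEnorm_pos {v : Fin k → ℝ} (hv : v ≠ 0) : 0 < vecEnorm v :=
  norm_pos_iff.mpr fun h => hv (by simpa using congrArg WithLp.ofLp h)

lemma specNorm_nonneg (M : Matrix (Fin a) (Fin b) ℝ) : 0 ≤ specNorm M :=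
  norm_nonneg _

lemma specNorm_pos {M : Matrix (Fin a) (Fin b) ℝ} (hM : M ≠ 0) : 0 < specNorm M := by
  rw [specNorm, norm_pos_iff, Ne, LinearEquiv.map_eq_zero_iff, LinearEquiv.map_eq_zero_iff]
  exact hM

open scoped Matrix.Norms.L2Operator in
lemma vecEnorm_mulVec_le (M : Matrix (Fin a) (Fin b) ℝ) (v : Fin b → ℝ) :
    vecEnorm (M *ᵥ v) ≤ specNorm M * vecEnorm v :=
  M.l2_opNorm_mulVec _

end Norms

namespace Matrix

theorem isUnit_of_rank_eq_card {n K : Type*} [Fintype n] [DecidableEq n] [Field K]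
    {A : Matrix n n K} (hA : A.rank = Fintype.card n) : IsUnit A := by
  refine mulVec_surjective_iff_isUnit.mp (LinearMap.range_eq_top (f := A.mulVecLin).mp ?_)
  apply Submodule.eq_top_of_finrank_eq
  rw [← rank, hA, Module.finrank_fintype_fun_eq_card]

theorem inv_transpose_mul_self_mul_transpose_mul_self {m n R : Type*} [Fintype m] [Fintype n]
    [DecidableEq n] [Field R] [LinearOrder R] [IsStrictOrderedRing R]
    {X : Matrix m n R} (hX : X.rank = Fintype.card n) : (Xᵀ * X)⁻¹ * Xᵀ * X = 1 := by
  have hunit : IsUnit (Xᵀ * X) := isUnit_of_rank_eq_card (by rw [rank_transpose_mul_self, hX])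
  rw [Matrix.mul_assoc, nonsing_inv_mul _ ((isUnit_iff_isUnit_det _).mp hunit)]

theorem mul_sub_mul_of_mul_eq_one {n p r R : Type*} [Fintype n] [Fintype p] [Fintype r]
    [DecidableEq p] [Ring R] {L : Matrix p n R} {X : Matrix n p R} (hLX : L * X = 1)
    (Y : Matrix p r R) (S : Matrix r n R) : L * (X * Y * S - X * L) = Y * S - L := by
  rw [Matrix.mul_sub, Matrix.mul_assoc X, ← Matrix.mul_assoc L, ← Matrix.mul_assoc L, hLX,
    Matrix.one_mul, Matrix.one_mul]

end Matrix

lemma vecEnorm_sub_le_of_mul_eq_one {n p r : ℕ} {L : Matrix (Fin p) (Fin n) ℝ}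
    {X : Matrix (Fin n) (Fin p) ℝ} (hLX : L * X = 1) (Y : Matrix (Fin p) (Fin r) ℝ)
    (S : Matrix (Fin r) (Fin n) ℝ) (y : Fin n → ℝ) :
    vecEnorm (Y *ᵥ (S *ᵥ y) - L *ᵥ y) ≤
      specNorm L * specNorm (X * Y * S - X * L) * vecEnorm y := by
  rw [mulVec_mulVec, ← sub_mulVec, ← mul_sub_mul_of_mul_eq_one hLX, ← mulVec_mulVec,
    mul_assoc]
  exact (vecEnorm_mulVec_le _ _).trans
    (mul_le_mul_of_nonneg_left (vecEnorm_mulVec_le _ _) (specNorm_nonneg _))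

theorem sketched_solution_relative_error_bound_general
    {n p r : ℕ} (X : Matrix (Fin n) (Fin p) ℝ) (hX : X.rank = p)
    (S : Matrix (Fin r) (Fin n) ℝ)
    (Y : Matrix (Fin p) (Fin r) ℝ)
    (y : Fin n → ℝ)
    (Xd : Matrix (Fin p) (Fin n) ℝ) (hXd : Xd = (Xᵀ * X)⁻¹ * Xᵀ)
    (P : Matrix (Fin n) (Fin n) ℝ) (hP : P = X * Y * S)
    (PX : Matrix (Fin n) (Fin n) ℝ) (hPX : PX = X * (Xᵀ * X)⁻¹ * Xᵀ)
    (betahat : Fin p → ℝ) (hbetahat : betahat = Xd *ᵥ y)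
    (betatilde : Fin p → ℝ) (hbetatilde : betatilde = Y *ᵥ (S *ᵥ y))
    (hne : betahat ≠ 0) :
    vecEnorm (betatilde - betahat) / vecEnorm betahat ≤
      (specNorm X * specNorm Xd) * (vecEnorm y / (specNorm X * vecEnorm betahat)) *
        specNorm (P - PX) ∧
    (PX *ᵥ y ≠ 0 →
      vecEnorm y / (specNorm X * vecEnorm betahat) ≤ vecEnorm y / vecEnorm (PX *ᵥ y) ∧
      vecEnorm (betatilde - betahat) / vecEnorm betahat ≤
        (specNorm X * specNorm Xd) * specNorm (P - PX) *
          (vecEnorm y / vecEnorm (PX *ᵥ y))) := by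
  have hXdX : Xd * X = 1 :=
    hXd ▸ inv_transpose_mul_self_mul_transpose_mul_self (by rwa [Fintype.card_fin])
  have hPX' : PX = X * Xd := by rw [hPX, hXd, Matrix.mul_assoc]
  have hX0 : X ≠ 0 := by
    rintro rfl
    exact hne (by simp [hbetahat, hXd])
  have hbetahat_pos := vecEnorm_pos hne
  have hX_pos := specNorm_pos hX0
  have herr : vecEnorm (betatilde - betahat) ≤ specNorm Xd * specNorm (P - PX) * vecEnorm y := by
    rw [hbetatilde, hbetahat, hP, hPX']
    exact vecEnorm_sub_le_of_mul_eq_one hXdX Y S y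
  have hfit : vecEnorm (PX *ᵥ y) ≤ specNorm X * vecEnorm betahat := by
    rw [hPX', ← mulVec_mulVec, ← hbetahat]
    exact vecEnorm_mulVec_le X betahat
  have hrel : vecEnorm (betatilde - betahat) / vecEnorm betahat ≤
      (specNorm X * specNorm Xd) * (vecEnorm y / (specNorm X * vecEnorm betahat)) *
        specNorm (P - PX) := by
    calc _ ≤ specNorm Xd * specNorm (P - PX) * vecEnorm y / vecEnorm betahat :=
          div_le_div_of_nonneg_right herr hbetahat_pos.le
      _ = _ := by field_simp
  refine ⟨hrel, fun hPXy => ?_⟩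
  have hratio := div_le_div_of_nonneg_left (vecEnorm_nonneg y) (vecEnorm_pos hPXy) hfit
  refine ⟨hratio, hrel.trans ?_⟩
  rw [mul_right_comm]
  have hXd_nonneg := specNorm_nonneg Xd
  have hgap_nonneg := specNorm_nonneg (P - PX)
  gcongr

/-- Corollary 2, solution bound: relative error bounds for the sketched
solution `β̃ = (SX)† S y` with respect to the exact solution `β̂ = X† y`. -/
theorem sketched_solution_relative_error_bound
    {n p r : ℕ} (X : Matrix (Fin n) (Fin p) ℝ) (hX : X.rank = p)
    (S : Matrix (Fin r) (Fin n) ℝ) (hpr : p ≤ r) (hrn : r ≤ n)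
    (Y : Matrix (Fin p) (Fin r) ℝ)
    (hp1 : (S * X) * Y * (S * X) = S * X)
    (hp2 : Y * ((S * X) * Y) = Y)
    (hp3 : ((S * X) * Y)ᵀ = (S * X) * Y)
    (hp4 : (Y * (S * X))ᵀ = Y * (S * X))
    (y : Fin n → ℝ)
    (Xd : Matrix (Fin p) (Fin n) ℝ) (hXd : Xd = (Xᵀ * X)⁻¹ * Xᵀ)
    (P : Matrix (Fin n) (Fin n) ℝ) (hP : P = X * Y * S)
    (PX : Matrix (Fin n) (Fin n) ℝ) (hPX : PX = X * (Xᵀ * X)⁻¹ * Xᵀ)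
    (betahat : Fin p → ℝ) (hbetahat : betahat = Xd *ᵥ y)
    (betatilde : Fin p → ℝ) (hbetatilde : betatilde = Y *ᵥ (S *ᵥ y))
    (hne : betahat ≠ 0) :
    vecEnorm (betatilde - betahat) / vecEnorm betahat ≤
      (specNorm X * specNorm Xd) * (vecEnorm y / (specNorm X * vecEnorm betahat)) *
        specNorm (P - PX) ∧
    (PX *ᵥ y ≠ 0 →
      vecEnorm y / (specNorm X * vecEnorm betahat) ≤ vecEnorm y / vecEnorm (PX *ᵥ y) ∧
      vecEnorm (betatilde - betahat) / vecEnorm betahat ≤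
        (specNorm X * specNorm Xd) * specNorm (P - PX) *
          (vecEnorm y / vecEnorm (PX *ᵥ y))) :=
  sketched_solution_relative_error_bound_general X hX S Y y Xd hXd P hP PX hPX betahat hbetahat
    betatilde hbetatilde hne
end

section
/- Let X be a real n×p matrix with rank(X) = p and β₀ ∈ ℝᵖ. On a probability space, let S : Ω → ℝ^{r×n} (p ≤ r ≤ n) be a random matrix and let Y : Ω → ℝ^{p×r} be such that for every ω, Y(ω) is the Moore–Penrose inverse of S(ω)X; set P₀(ω) = Y(ω)S(ω)X. Let ε : Ω → ℝⁿ be a random vector, independent of S, with integrable components and E[ε_i] = 0 for all i. Assume all entries of Y·S and of P₀ are integrable. Set y = Xβ₀ + ε and β̃ = Y S y. Then the total expectation of the sketched solution is E[β̃] = E[P₀]β₀ = β₀ − (I_p − E[P₀])β₀ componentwise, where E[P₀] is the entrywise expectation of P₀. -/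
/-!
Write `A = S X`. Its Moore–Penrose inverse is the Tikhonov limit
`Y = lim_{δ → 0⁺} (AᵀA + δ I)⁻¹ Aᵀ`: the Penrose equations give
`(AᵀA + δ I)⁻¹ Aᵀ = Y - δ W + δ (δ (AᵀA + δ I)⁻¹) W` with `W = Y Yᵀ Y`, and the entries of
`δ (AᵀA + δ I)⁻¹` are bounded by `1`. Each regularized inverse is a continuous function of `S`,
so `Y S` is `σ(S)`-measurable and therefore independent of `ε`. Splitting
`β̃ = (Y S X) β₀ + (Y S) ε`, the first term has mean `E[P₀] β₀` and every summand
`(Y S)ᵢⱼ εⱼ` of the second has mean `E[(Y S)ᵢⱼ] E[εⱼ] = 0`.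
-/

open Matrix MeasureTheory ProbabilityTheory Filter Topology

namespace Matrix

theorem PosSemidef.posDef_add_smul_one {q : Type*} [DecidableEq q] {M : Matrix q q ℝ}
    (hM : M.PosSemidef) {δ : ℝ} (hδ : 0 < δ) : (M + δ • 1).PosDef :=
  PosDef.posSemidef_add hM (PosDef.one.smul hδ)

variable {m q : Type*} [Fintype m] [Fintype q]

structure IsMoorePenroseInverse (A : Matrix m q ℝ) (Y : Matrix q m ℝ) : Prop where
  penrose₁ : A * Y * A = A
  penrose₂ : Y * (A * Y) = Y
  penrose₃ : (A * Y)ᵀ = A * Y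
  penrose₄ : (Y * A)ᵀ = Y * A

namespace IsMoorePenroseInverse

variable {A : Matrix m q ℝ} {Y : Matrix q m ℝ}

theorem transpose_mul_self_mul (h : A.IsMoorePenroseInverse Y) : Aᵀ * A * Y = Aᵀ := by
  conv_rhs => rw [← h.penrose₁, transpose_mul, h.penrose₃]
  rw [Matrix.mul_assoc]

theorem eq_transpose_mul (h : A.IsMoorePenroseInverse Y) : Y = Aᵀ * (Yᵀ * Y) := by
  conv_lhs => rw [← h.penrose₂, ← Matrix.mul_assoc, ← h.penrose₄]
  rw [transpose_mul, Matrix.mul_assoc]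

end IsMoorePenroseInverse

variable [DecidableEq q]

theorem PosSemidef.abs_smul_inv_add_smul_one_apply_le_one {M : Matrix q q ℝ} (hM : M.PosSemidef)
    {δ : ℝ} (hδ : 0 < δ) (i k : q) : |(δ • (M + δ • 1)⁻¹) i k| ≤ 1 := by
  have hunit : IsUnit (M + δ • 1) := (hM.posDef_add_smul_one hδ).isUnit
  have hw : (M + δ • 1) *ᵥ (δ • (M + δ • 1)⁻¹).col k = δ • Pi.single k 1 := by
    rw [← mulVec_single_one, mulVec_mulVec, Matrix.mul_smul, mul_nonsing_inv _
      ((isUnit_iff_isUnit_det _).mp hunit), smul_mulVec, one_mulVec]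
  set w : q → ℝ := (δ • (M + δ • 1)⁻¹).col k
  -- pairing `hw` with `w` gives `wᵀ M w + δ ‖w‖² = δ w k`, and `wᵀ M w ≥ 0`
  have hnorm : w ⬝ᵥ w ≤ w k := by
    have hq := hM.dotProduct_mulVec_nonneg w
    have : w ⬝ᵥ ((M + δ • 1) *ᵥ w) = δ * w k := by
      rw [hw]; simp [dotProduct_smul]
    rw [add_mulVec, dotProduct_add, smul_mulVec, one_mulVec, dotProduct_smul, smul_eq_mul] at this
    simp only [star_trivial] at hq
    nlinarith
  have hsq : ∀ j, w j ^ 2 ≤ w ⬝ᵥ w := fun j => by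
    simpa [dotProduct, sq] using
      Finset.single_le_sum (f := fun l => w l * w l) (fun l _ => mul_self_nonneg _)
        (Finset.mem_univ j)
  show |w i| ≤ 1
  rw [← sq_le_one_iff_abs_le_one]
  nlinarith [hsq i, hsq k]

theorem continuous_inv_transpose_mul_self_add_smul_one {δ : ℝ} (hδ : 0 < δ) :
    Continuous fun A : Matrix m q ℝ => (Aᵀ * A + δ • 1)⁻¹ := by
  refine continuous_iff_continuousAt.2 fun A => (continuousAt_matrix_inv _ ?_).comp ?_
  · have hunit : IsUnit (Aᵀ * A + δ • 1).det := (isUnit_iff_isUnit_det _).mp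
      ((posSemidef_conjTranspose_mul_self A).posDef_add_smul_one hδ).isUnit
    exact NormedRing.inverse_continuousAt hunit.unit
  · exact ((continuous_id.matrix_transpose.matrix_mul continuous_id).add
      continuous_const).continuousAt

namespace IsMoorePenroseInverse

variable {A : Matrix m q ℝ} {Y : Matrix q m ℝ}

theorem inv_transpose_mul_self_add_smul_one_mul_transpose
    (h : A.IsMoorePenroseInverse Y) {δ : ℝ} (hδ : 0 < δ) :
    (Aᵀ * A + δ • 1)⁻¹ * Aᵀ =
      Y - δ • (Y * (Yᵀ * Y)) + δ • (δ • (Aᵀ * A + δ • 1)⁻¹) * (Y * (Yᵀ * Y)) := by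
  set Mδ := Aᵀ * A + δ • 1
  have hunit : IsUnit Mδ.det := (isUnit_iff_isUnit_det _).mp
    ((posSemidef_conjTranspose_mul_self A).posDef_add_smul_one hδ).isUnit
  have hMδ : Mδ⁻¹ * (Aᵀ * A) = 1 - δ • Mδ⁻¹ := by
    rw [show Aᵀ * A = Mδ - δ • 1 by simp [Mδ], Matrix.mul_sub, nonsing_inv_mul _ hunit,
      Matrix.mul_smul, Matrix.mul_one]
  set W := Y * (Yᵀ * Y)
  have hW : Aᵀ * A * W = Y := by
    calc Aᵀ * A * W = Aᵀ * A * Y * (Yᵀ * Y) := by simp only [W, Matrix.mul_assoc]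
      _ = Y := by rw [h.transpose_mul_self_mul, ← h.eq_transpose_mul]
  calc Mδ⁻¹ * Aᵀ = Mδ⁻¹ * (Aᵀ * A) * Y := by rw [Matrix.mul_assoc, h.transpose_mul_self_mul]
    _ = Y - δ • (Mδ⁻¹ * Y) := by rw [hMδ, Matrix.sub_mul, Matrix.one_mul, Matrix.smul_mul]
    _ = Y - δ • (Mδ⁻¹ * (Aᵀ * A) * W) := by rw [Matrix.mul_assoc, hW]
    _ = Y - δ • W + δ • (δ • Mδ⁻¹) * W := by
      rw [hMδ, Matrix.sub_mul, Matrix.one_mul, smul_sub]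
      simp only [Matrix.smul_mul]
      abel

theorem tendsto_inv_transpose_mul_self_add_smul_one_mul_transpose
    (h : A.IsMoorePenroseInverse Y) :
    Tendsto (fun δ : ℝ => (Aᵀ * A + δ • 1)⁻¹ * Aᵀ) (𝓝[>] 0) (𝓝 Y) := by
  set W := Y * (Yᵀ * Y)
  have hδ : Tendsto (fun δ : ℝ => δ) (𝓝[>] 0) (𝓝 0) := nhdsWithin_le_nhds
  have hsmul : Tendsto (fun δ : ℝ => δ • (δ • (Aᵀ * A + δ • 1)⁻¹)) (𝓝[>] 0) (𝓝 0) := by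
    refine tendsto_pi_nhds.2 fun i => tendsto_pi_nhds.2 fun k => ?_
    refine squeeze_zero_norm' ?_ (tendsto_norm_zero.comp hδ)
    filter_upwards [self_mem_nhdsWithin] with δ hδpos
    have := (posSemidef_conjTranspose_mul_self A).abs_smul_inv_add_smul_one_apply_le_one hδpos i k
    rw [smul_apply, smul_eq_mul, norm_mul]
    exact mul_le_of_le_one_right (norm_nonneg δ) this
  have hlim : Tendsto (fun δ : ℝ => Y - δ • W + δ • (δ • (Aᵀ * A + δ • 1)⁻¹) * W)
      (𝓝[>] 0) (𝓝 Y) := by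
    simpa using (tendsto_const_nhds.sub (hδ.smul_const W)).add
      (((continuous_id.matrix_mul continuous_const).tendsto 0).comp hsmul :
        Tendsto (fun δ : ℝ => δ • (δ • (Aᵀ * A + δ • 1)⁻¹) * W) _ _)
  refine hlim.congr' (eventually_nhdsWithin_of_forall fun δ hδpos => ?_)
  exact (h.inv_transpose_mul_self_add_smul_one_mul_transpose hδpos).symm

end IsMoorePenroseInverse

end Matrix

theorem measurable_comap_of_tendsto {Ω β γ : Type*} [TopologicalSpace β] [MeasurableSpace β]
    [OpensMeasurableSpace β] [TopologicalSpace γ] [TopologicalSpace.PseudoMetrizableSpace γ]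
    [MeasurableSpace γ] [BorelSpace γ] {F : ℕ → β → γ} (hF : ∀ k, Continuous (F k))
    {f : Ω → β} {g : Ω → γ} (hlim : ∀ ω, Tendsto (fun k => F k (f ω)) atTop (𝓝 (g ω))) :
    Measurable[MeasurableSpace.comap f ‹_›] g :=
  letI := MeasurableSpace.comap f ‹_›
  measurable_of_tendsto_metrizable (fun k => (hF k).measurable.comp (comap_measurable f))
    (tendsto_pi_nhds.2 hlim)

theorem ProbabilityTheory.IndepFun.of_measurable_comap_right {Ω β γ δ : Type*}
    [MeasurableSpace Ω] {μ : Measure Ω} [MeasurableSpace β] [mγ : MeasurableSpace γ]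
    [MeasurableSpace δ] {f : Ω → β} {g : Ω → γ} {φ : Ω → δ} (hfg : f ⟂ᵢ[μ] g)
    (hφ : Measurable[mγ.comap g] φ) : f ⟂ᵢ[μ] φ := by
  rw [IndepFun_iff_Indep] at hfg ⊢
  exact indep_of_indep_of_le_right hfg hφ.comap_le

theorem measurable_comap_pinv_mul_apply {Ω m n q : Type*} [Fintype m] [Fintype n]
    [Fintype q] [DecidableEq q] {S : Ω → Matrix m n ℝ} (X : Matrix n q ℝ)
    {Y : Ω → Matrix q m ℝ} (hY : ∀ ω, (S ω * X).IsMoorePenroseInverse (Y ω)) (i : q) (j : n) :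
    Measurable[MeasurableSpace.comap (fun ω a b => S ω a b : Ω → m → n → ℝ) MeasurableSpace.pi]
      fun ω => (Y ω * S ω) i j := by
  set δ : ℕ → ℝ := fun k => 1 / ((k : ℝ) + 1)
  have hδ : Tendsto δ atTop (𝓝[>] 0) := tendsto_nhdsWithin_iff.2
    ⟨tendsto_one_div_add_atTop_nhds_zero_nat, .of_forall fun k => by
      simp only [δ, Set.mem_Ioi]; positivity⟩
  refine measurable_comap_of_tendsto (F := fun k (M : m → n → ℝ) =>
    ((((of M * X)ᵀ * (of M * X) + δ k • 1)⁻¹ * (of M * X)ᵀ * of M : Matrix q n ℝ) i j))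
    (fun k => ?_) fun ω => ?_
  · have hA : Continuous fun M : m → n → ℝ => of M * X := continuous_id.matrix_mul continuous_const
    exact (continuous_apply_apply i j).comp
      ((((continuous_inv_transpose_mul_self_add_smul_one (by positivity)).comp hA).matrix_mul
        hA.matrix_transpose).matrix_mul continuous_id)
  · exact (((continuous_apply_apply i j).comp
      (continuous_id.matrix_mul continuous_const)).tendsto (Y ω)).comp
      ((hY ω).tendsto_inv_transpose_mul_self_add_smul_one_mul_transpose.comp hδ)

section Expectation

variable {Ω m k : Type*} [Fintype k] [MeasurableSpace Ω] {μ : Measure Ω}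

theorem integrable_mulVec_const_apply {B : Ω → Matrix m k ℝ}
    (hB : ∀ i j, Integrable (fun ω => B ω i j) μ) (v : k → ℝ) (i : m) :
    Integrable (fun ω => (B ω *ᵥ v) i) μ :=
  integrable_finsetSum _ fun j _ => (hB i j).mul_const (v j)

theorem integral_mulVec_const_apply {B : Ω → Matrix m k ℝ}
    (hB : ∀ i j, Integrable (fun ω => B ω i j) μ) {EB : Matrix m k ℝ}
    (hEB : ∀ i j, EB i j = ∫ ω, B ω i j ∂μ) (v : k → ℝ) (i : m) :
    ∫ ω, (B ω *ᵥ v) i ∂μ = (EB *ᵥ v) i := by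
  simp only [mulVec, dotProduct, hEB]
  rw [integral_finsetSum _ fun j _ => (hB i j).mul_const (v j)]
  simp only [integral_mul_const]

variable {C : Ω → Matrix m k ℝ} {e : Ω → k → ℝ}
  (hCe : ∀ i j, IndepFun (fun ω => C ω i j) (fun ω => e ω j) μ)
  (hC : ∀ i j, Integrable (fun ω => C ω i j) μ) (he : ∀ j, Integrable (fun ω => e ω j) μ)
include hCe hC he

theorem integrable_mulVec_apply_of_indepFun (i : m) :
    Integrable (fun ω => (C ω *ᵥ e ω) i) μ :=
  integrable_finsetSum _ fun j _ => (hCe i j).integrable_mul (hC i j) (he j)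

theorem integral_mulVec_apply_eq_zero_of_indepFun (he₀ : ∀ j, ∫ ω, e ω j ∂μ = 0) (i : m) :
    ∫ ω, (C ω *ᵥ e ω) i ∂μ = 0 := by
  simp only [mulVec, dotProduct]
  rw [integral_finsetSum _ fun j _ => by exact (hCe i j).integrable_mul (hC i j) (he j)]
  refine Finset.sum_eq_zero fun j _ => ?_
  rw [(hCe i j).integral_fun_mul_eq_mul_integral (hC i j).aestronglyMeasurable
    (he j).aestronglyMeasurable, he₀ j, mul_zero]

end Expectation

theorem sketched_solution_total_expectation_general
    {n p r : ℕ} (X : Matrix (Fin n) (Fin p) ℝ)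
    {Ω : Type*} [MeasurableSpace Ω] (μ : Measure Ω)
    (S : Ω → Matrix (Fin r) (Fin n) ℝ)
    (Y : Ω → Matrix (Fin p) (Fin r) ℝ)
    (hp1 : ∀ ω, (S ω * X) * Y ω * (S ω * X) = S ω * X)
    (hp2 : ∀ ω, Y ω * ((S ω * X) * Y ω) = Y ω)
    (hp3 : ∀ ω, ((S ω * X) * Y ω)ᵀ = (S ω * X) * Y ω)
    (hp4 : ∀ ω, (Y ω * (S ω * X))ᵀ = Y ω * (S ω * X))
    (β₀ : Fin p → ℝ) (ε : Ω → Fin n → ℝ)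
    (hindep : ProbabilityTheory.IndepFun ε ((fun ω i j => S ω i j) : Ω → Fin r → Fin n → ℝ) μ)
    (hεint : ∀ i, Integrable (fun ω => ε ω i) μ)
    (hεmean : ∀ i, ∫ ω, ε ω i ∂μ = 0)
    (hYSint : ∀ i j, Integrable (fun ω => (Y ω * S ω) i j) μ)
    (hP0int : ∀ i j, Integrable (fun ω => (Y ω * (S ω * X)) i j) μ)
    (EP0 : Matrix (Fin p) (Fin p) ℝ)
    (hEP0 : ∀ i j, EP0 i j = ∫ ω, (Y ω * (S ω * X)) i j ∂μ)
    (βtilde : Ω → Fin p → ℝ)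
    (hβtilde : ∀ ω, βtilde ω = Y ω *ᵥ (S ω *ᵥ (X *ᵥ β₀ + ε ω))) :
    (∀ i, ∫ ω, βtilde ω i ∂μ = (EP0 *ᵥ β₀) i) ∧
    EP0 *ᵥ β₀ = β₀ - (1 - EP0) *ᵥ β₀ := by
  have hpinv : ∀ ω, (S ω * X).IsMoorePenroseInverse (Y ω) :=
    fun ω => ⟨hp1 ω, hp2 ω, hp3 ω, hp4 ω⟩
  have hYSε : ∀ i j, IndepFun (fun ω => (Y ω * S ω) i j) (fun ω => ε ω j) μ := fun i j =>
    ((hindep.of_measurable_comap_right (measurable_comap_pinv_mul_apply X hpinv i j)).comp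
      (measurable_pi_apply j) measurable_id).symm
  have hsplit : ∀ ω, βtilde ω = (Y ω * (S ω * X)) *ᵥ β₀ + (Y ω * S ω) *ᵥ ε ω := fun ω => by
    rw [hβtilde, mulVec_add, mulVec_add, mulVec_mulVec, mulVec_mulVec, mulVec_mulVec,
      Matrix.mul_assoc]
  refine ⟨fun i => ?_, by rw [sub_mulVec, one_mulVec, sub_sub_cancel]⟩
  simp only [hsplit, Pi.add_apply]
  rw [integral_add (integrable_mulVec_const_apply hP0int β₀ i)
      (integrable_mulVec_apply_of_indepFun hYSε hYSint hεint i),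
    integral_mulVec_const_apply hP0int hEP0,
    integral_mulVec_apply_eq_zero_of_indepFun hYSε hYSint hεint hεmean, add_zero]

/-- total expectation of the sketched solution: with a random sketching
matrix `S`, `Y(ω)` the Moore–Penrose inverse of `S(ω) X`, `P₀(ω) = Y(ω) S(ω) X`, and
mean-zero noise `ε` independent of `S`, the sketched solution `β̃ = Y S (Xβ₀ + ε)`
satisfies `E[β̃] = E[P₀] β₀ = β₀ - (I - E[P₀]) β₀` (expectations entrywise). -/
theorem sketched_solution_total_expectation
    {n p r : ℕ} (X : Matrix (Fin n) (Fin p) ℝ) (hX : X.rank = p)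
    (hpr : p ≤ r) (hrn : r ≤ n)
    {Ω : Type*} [MeasurableSpace Ω] (μ : Measure Ω) [IsProbabilityMeasure μ]
    (S : Ω → Matrix (Fin r) (Fin n) ℝ)
    (Y : Ω → Matrix (Fin p) (Fin r) ℝ)
    (hp1 : ∀ ω, (S ω * X) * Y ω * (S ω * X) = S ω * X)
    (hp2 : ∀ ω, Y ω * ((S ω * X) * Y ω) = Y ω)
    (hp3 : ∀ ω, ((S ω * X) * Y ω)ᵀ = (S ω * X) * Y ω)
    (hp4 : ∀ ω, (Y ω * (S ω * X))ᵀ = Y ω * (S ω * X))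
    (β₀ : Fin p → ℝ) (ε : Ω → Fin n → ℝ)
    (hindep : ProbabilityTheory.IndepFun ε ((fun ω i j => S ω i j) : Ω → Fin r → Fin n → ℝ) μ)
    (hεint : ∀ i, Integrable (fun ω => ε ω i) μ)
    (hεmean : ∀ i, ∫ ω, ε ω i ∂μ = 0)
    (hYSint : ∀ i j, Integrable (fun ω => (Y ω * S ω) i j) μ)
    (hP0int : ∀ i j, Integrable (fun ω => (Y ω * (S ω * X)) i j) μ)
    (EP0 : Matrix (Fin p) (Fin p) ℝ)
    (hEP0 : ∀ i j, EP0 i j = ∫ ω, (Y ω * (S ω * X)) i j ∂μ)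
    (βtilde : Ω → Fin p → ℝ)
    (hβtilde : ∀ ω, βtilde ω = Y ω *ᵥ (S ω *ᵥ (X *ᵥ β₀ + ε ω))) :
    (∀ i, ∫ ω, βtilde ω i ∂μ = (EP0 *ᵥ β₀) i) ∧
    EP0 *ᵥ β₀ = β₀ - (1 - EP0) *ᵥ β₀ :=
  sketched_solution_total_expectation_general X μ S Y hp1 hp2 hp3 hp4 β₀ ε hindep hεint hεmean
    hYSint hP0int EP0 hEP0 βtilde hβtilde
end

section
/- Let X be a real n×p matrix with rank(X) = p, X† = (XᵀX)⁻¹Xᵀ, S ∈ ℝ^{r×n} with p ≤ r ≤ n and rank(SX) = p, (SX)† the Moore–Penrose inverse of SX, P = X(SX)†S, and P_X = X(XᵀX)⁻¹Xᵀ. Then PPᵀ − P_X is positive semidefinite; consequently X†(PPᵀ − P_X)(X†)ᵀ is positive semidefinite and trace(X†(PPᵀ − P_X)(X†)ᵀ) ≥ 0. -/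
open Matrix

lemma aux_isUnit_of_rank_eq {p : ℕ} (A : Matrix (Fin p) (Fin p) ℝ) (h : A.rank = p) :
    IsUnit A := by
  rw [← Matrix.mulVec_surjective_iff_isUnit]
  have hr : LinearMap.range A.mulVecLin = ⊤ := by
    apply Submodule.eq_top_of_finrank_eq
    rw [show Module.finrank ℝ (LinearMap.range A.mulVecLin) = A.rank from rfl, h]
    simp
  intro y
  exact LinearMap.range_eq_top.mp hr y

lemma aux_trace_nonneg {n : ℕ} {M : Matrix (Fin n) (Fin n) ℝ} (h : M.PosSemidef) :
    0 ≤ M.trace := by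
  rw [Matrix.trace]
  apply Finset.sum_nonneg
  intro i _
  have := h.dotProduct_mulVec_nonneg (Pi.single i 1)
  simpa [dotProduct, Matrix.mulVec_single, Pi.single_apply, Finset.sum_ite_eq,
    Matrix.diag] using this

/-- non-negativity of the excess variance under rank preservation:
if `rank(SX) = p`, then `PPᵀ - P_X` is positive semidefinite, hence
`X†(PPᵀ - P_X)(X†)ᵀ` is positive semidefinite and has non-negative trace. -/
theorem excess_variance_posSemidef_rank_preserved
    {n p r : ℕ} (X : Matrix (Fin n) (Fin p) ℝ) (hX : X.rank = p)
    (S : Matrix (Fin r) (Fin n) ℝ) (hpr : p ≤ r) (hrn : r ≤ n)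
    (Y : Matrix (Fin p) (Fin r) ℝ)
    (hp1 : (S * X) * Y * (S * X) = S * X)
    (hp2 : Y * ((S * X) * Y) = Y)
    (hp3 : ((S * X) * Y)ᵀ = (S * X) * Y)
    (hp4 : (Y * (S * X))ᵀ = Y * (S * X))
    (hrank : (S * X).rank = p)
    (Xd : Matrix (Fin p) (Fin n) ℝ) (hXd : Xd = (Xᵀ * X)⁻¹ * Xᵀ)
    (P : Matrix (Fin n) (Fin n) ℝ) (hP : P = X * Y * S)
    (PX : Matrix (Fin n) (Fin n) ℝ) (hPX : PX = X * (Xᵀ * X)⁻¹ * Xᵀ) :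
    (P * Pᵀ - PX).PosSemidef ∧
    (Xd * (P * Pᵀ - PX) * Xdᵀ).PosSemidef ∧
    0 ≤ (Xd * (P * Pᵀ - PX) * Xdᵀ).trace := by
  have hXtX : (Xᵀ * X).rank = p := by rw [Matrix.rank_transpose_mul_self, hX]
  have hXu : IsUnit (Xᵀ * X) := aux_isUnit_of_rank_eq _ hXtX
  have hXd' : IsUnit (Xᵀ * X).det := (Matrix.isUnit_iff_isUnit_det _).mp hXu
  have hcancel : (Xᵀ * X)⁻¹ * (Xᵀ * X) = 1 := Matrix.nonsing_inv_mul _ hXd'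
  -- Y (SX) = 1
  have hA : Y * (S * X) = 1 := by
    set A := Y * (S * X) with hAdef
    have hrle : A.rank ≤ p := A.rank_le_card_width.trans (by simp)
    have hge : p ≤ A.rank := by
      have h1 : (S * X) * A = S * X := by
        rw [hAdef, ← Matrix.mul_assoc, hp1]
      calc p = ((S * X) * A).rank := by rw [h1, hrank]
        _ ≤ A.rank := Matrix.rank_mul_le_right _ _
    have hAu : IsUnit A.det :=
      (Matrix.isUnit_iff_isUnit_det _).mp (aux_isUnit_of_rank_eq _ (le_antisymm hrle hge))
    have hAA : A * A = A := by
      rw [hAdef]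
      calc Y * (S * X) * (Y * (S * X)) = Y * ((S * X) * Y) * (S * X) := by
            simp only [Matrix.mul_assoc]
        _ = Y * (S * X) := by rw [hp2]
    have h2 := congrArg (· * A⁻¹) hAA
    simp only [Matrix.mul_assoc, Matrix.mul_nonsing_inv _ hAu, mul_one] at h2
    exact h2
  -- P X = X
  have hPXeq : P * X = X := by
    rw [hP]
    calc X * Y * S * X = X * (Y * (S * X)) := by simp only [Matrix.mul_assoc]
      _ = X := by rw [hA, Matrix.mul_one]
  -- PX symmetric
  have hXtXsym : (Xᵀ * X)ᵀ = Xᵀ * X := by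
    rw [Matrix.transpose_mul, Matrix.transpose_transpose]
  have hPXsym : PXᵀ = PX := by
    rw [hPX, Matrix.transpose_mul, Matrix.transpose_mul, Matrix.transpose_transpose,
      Matrix.transpose_nonsing_inv, hXtXsym, Matrix.mul_assoc]
  -- PX idempotent
  have hPXPX : PX * PX = PX := by
    rw [hPX]
    calc X * (Xᵀ * X)⁻¹ * Xᵀ * (X * (Xᵀ * X)⁻¹ * Xᵀ)
        = X * ((Xᵀ * X)⁻¹ * (Xᵀ * X)) * ((Xᵀ * X)⁻¹ * Xᵀ) := by
          simp only [Matrix.mul_assoc]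
      _ = X * (Xᵀ * X)⁻¹ * Xᵀ := by
          rw [hcancel, Matrix.mul_one, Matrix.mul_assoc]
  -- P PX = PX
  have hPPX : P * PX = PX := by
    rw [hPX, ← Matrix.mul_assoc, ← Matrix.mul_assoc, hPXeq]
  have hPXPt : PX * Pᵀ = PX := by
    have h3 : (P * PX)ᵀ = PXᵀ := congrArg Matrix.transpose hPPX
    rw [Matrix.transpose_mul, hPXsym] at h3
    rw [h3]
  -- key factorization
  have key : P * Pᵀ - PX = (P - PX) * (P - PX)ᵀ := by
    rw [Matrix.transpose_sub, Matrix.sub_mul, Matrix.mul_sub, Matrix.mul_sub,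
      hPXsym, hPPX, hPXPt, hPXPX]
    abel
  have psd1 : (P * Pᵀ - PX).PosSemidef := by
    rw [key]
    have := Matrix.posSemidef_self_mul_conjTranspose (P - PX)
    rwa [Matrix.conjTranspose_eq_transpose_of_trivial] at this
  have key2 : Xd * (P * Pᵀ - PX) * Xdᵀ = (Xd * (P - PX)) * (Xd * (P - PX))ᵀ := by
    rw [key, Matrix.transpose_mul]
    simp only [Matrix.mul_assoc]
  have psd2 : (Xd * (P * Pᵀ - PX) * Xdᵀ).PosSemidef := by
    rw [key2]
    have := Matrix.posSemidef_self_mul_conjTranspose (Xd * (P - PX))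
    rwa [Matrix.conjTranspose_eq_transpose_of_trivial] at this
  exact ⟨psd1, psd2, aux_trace_nonneg psd2⟩
end

section
/- Let X be a real n×p matrix with rank(X) = p, X† = (XᵀX)⁻¹Xᵀ, and β₀ ∈ ℝᵖ. On a probability space, let S : Ω → ℝ^{r×n} (p ≤ r ≤ n) be a random matrix with rank(S(ω)X) = p almost surely, let Y(ω) be the Moore–Penrose inverse of S(ω)X, and let ε : Ω → ℝⁿ be independent of S with E[ε_i] = 0 and E[ε_iε_j] = σ²δ_{ij} (σ > 0); assume square-integrability of all relevant entries. Set β̃ = YS(Xβ₀ + ε) and β̂ = X†(Xβ₀ + ε). Then V[β̃] − V[β̂] is positive semidefinite (Loewner order V[β̃] ⪰ V[β̂]), and in particular trace(V[β̃]) ≥ trace(V[β̂]), where V[·] denotes the covariance matrix. -/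
/-!
Where `S X` has full column rank, the Penrose equations force `Y = (SX)†`, so `Y S = G(S)`
for the measurable map `G(M) = (MX)† M`, and `G(S) X = I`. Hence `β̃ = β₀ + G(S) ε` and
`β̂ = β₀ + X† ε`, and independence of `ε` and `S` gives `V[β̃] = σ² E[G Gᵀ]`,
`V[β̂] = σ² X† X†ᵀ`. For every left inverse `G` of `X` one has `X† Gᵀ = (XᵀX)⁻¹ = X† X†ᵀ`, so
`G Gᵀ - X† X†ᵀ = (G - X†)(G - X†)ᵀ`, whose expectation is positive semidefinite.
-/

open Matrix MeasureTheory ProbabilityTheory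

namespace Matrix

variable {m n l : Type*} [Fintype m]

theorem sub_mul_transpose_sub {R : Type*} [CommRing R] {A W : Matrix n m R}
    (h : W * Aᵀ = W * Wᵀ) : (A - W) * (A - W)ᵀ = A * Aᵀ - W * Wᵀ := by
  have h' : A * Wᵀ = W * Wᵀ := by
    rw [← transpose_transpose (A * Wᵀ), transpose_mul, transpose_transpose, h, transpose_mul,
      transpose_transpose]
  rw [transpose_sub, Matrix.sub_mul, Matrix.mul_sub, Matrix.mul_sub, h, h']
  abel

theorem mulVec_apply_mul_mulVec_apply {R : Type*} [CommSemiring R] (M : Matrix n m R)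
    (x : m → R) (k l : n) :
    (M *ᵥ x) k * (M *ᵥ x) l = ∑ i, ∑ j, M k i * M l j * (x i * x j) := by
  simp only [mulVec, dotProduct, Finset.sum_mul_sum]
  exact Finset.sum_congr rfl fun i _ => Finset.sum_congr rfl fun j _ => by ring

variable [Fintype n] [DecidableEq n]

theorem isUnit_of_rank_eq_card_s17 {K : Type*} [Field K] {M : Matrix n n K}
    (h : M.rank = Fintype.card n) : IsUnit M := by
  have hrange : LinearMap.range M.mulVecLin = ⊤ :=
    Submodule.eq_top_of_finrank_eq (by rwa [Module.finrank_fintype_fun_eq_card])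
  exact mulVec_surjective_iff_isUnit.mp (LinearMap.range_eq_top.mp hrange)

theorem isUnit_transpose_mul_self {B : Matrix m n ℝ} (h : B.rank = Fintype.card n) :
    IsUnit (Bᵀ * B) :=
  isUnit_of_rank_eq_card_s17 (by rwa [rank_transpose_mul_self])

/-- The Moore–Penrose inverse `B†` when `B` has full column rank. -/
noncomputable def leastSquaresInv (B : Matrix m n ℝ) : Matrix n m ℝ := (Bᵀ * B)⁻¹ * Bᵀ

theorem leastSquaresInv_mul_self {B : Matrix m n ℝ} (h : B.rank = Fintype.card n) :
    leastSquaresInv B * B = 1 := by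
  rw [leastSquaresInv, Matrix.mul_assoc,
    nonsing_inv_mul _ ((isUnit_iff_isUnit_det _).mp (isUnit_transpose_mul_self h))]

theorem eq_leastSquaresInv_of_mul_mul_self {B : Matrix m n ℝ} {Y : Matrix n m ℝ}
    (h : B.rank = Fintype.card n) (h1 : B * Y * B = B) (h3 : (B * Y)ᵀ = B * Y) :
    Y = leastSquaresInv B := by
  have hnormal : Bᵀ * B * Y = Bᵀ := by
    rw [Matrix.mul_assoc, ← h3, ← transpose_mul, h1]
  exact (nonsing_inv_mul_cancel_left _ _
    ((isUnit_iff_isUnit_det _).mp (isUnit_transpose_mul_self h))).symm.trans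
    (congrArg _ hnormal)

theorem leastSquaresInv_mul_transpose {A : Matrix n m ℝ} {B : Matrix m n ℝ} (hA : A * B = 1) :
    leastSquaresInv B * Aᵀ = (Bᵀ * B)⁻¹ := by
  rw [leastSquaresInv, Matrix.mul_assoc, ← transpose_mul, hA, transpose_one, Matrix.mul_one]

theorem mul_transpose_sub_leastSquaresInv_mul_transpose {A : Matrix n m ℝ} {B : Matrix m n ℝ}
    (hB : B.rank = Fintype.card n) (hA : A * B = 1) :
    A * Aᵀ - leastSquaresInv B * (leastSquaresInv B)ᵀ
      = (A - leastSquaresInv B) * (A - leastSquaresInv B)ᵀ :=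
  (sub_mul_transpose_sub (by rw [leastSquaresInv_mul_transpose hA,
    leastSquaresInv_mul_transpose (leastSquaresInv_mul_self hB)])).symm

theorem measurable_inv_apply {α : Type*} [TopologicalSpace α] [MeasurableSpace α]
    [OpensMeasurableSpace α] {f : α → Matrix n n ℝ} (hf : Continuous f) (i j : n) :
    Measurable fun a => (f a)⁻¹ i j := by
  simp only [inv_def, Ring.inverse_eq_inv', smul_apply, smul_eq_mul]
  exact hf.matrix_det.measurable.inv.mul (hf.matrix_adjugate.matrix_elem i j).measurable

theorem measurable_leastSquaresInv_mul_apply {α : Type*} [TopologicalSpace α] [MeasurableSpace α]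
    [OpensMeasurableSpace α] {f : α → Matrix m n ℝ} {g : α → Matrix m l ℝ} (hf : Continuous f)
    (hg : Continuous g) (i : n) (j : l) :
    Measurable fun a => (leastSquaresInv (f a) * g a) i j := by
  simp only [leastSquaresInv, Matrix.mul_assoc, mul_apply (M := (_ : Matrix n n ℝ)⁻¹)]
  exact Finset.measurable_sum _ fun k _ =>
    (measurable_inv_apply (hf.matrix_transpose.matrix_mul hf) i k).mul
      ((hf.matrix_transpose.matrix_mul hg).matrix_elem k j).measurable

theorem measurable_leastSquaresInv_mul_mul [Fintype l] (X : Matrix m n ℝ) :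
    Measurable fun (M : l → m → ℝ) (k : n) (i : m) => (leastSquaresInv (of M * X) * of M) k i := by
  have hof : Continuous fun M : l → m → ℝ => of M := continuous_id
  exact measurable_pi_lambda _ fun k => measurable_pi_lambda _ fun i =>
    measurable_leastSquaresInv_mul_apply (hof.matrix_mul continuous_const) hof k i

end Matrix

section Moments

variable {Ω ι κ : Type*} [MeasurableSpace Ω] {μ : Measure Ω}

noncomputable def covMatrix (μ : Measure Ω) (Z : Ω → ι → ℝ) : Matrix ι ι ℝ :=
  of fun k l => (∫ ω, Z ω k * Z ω l ∂μ) - (∫ ω, Z ω k ∂μ) * ∫ ω, Z ω l ∂μ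

noncomputable def entrywiseIntegral (μ : Measure Ω) (M : Ω → Matrix ι κ ℝ) : Matrix ι κ ℝ :=
  of fun i j => ∫ ω, M ω i j ∂μ

theorem covMatrix_congr_ae {Z Z' : Ω → ι → ℝ} (h : Z =ᵐ[μ] Z') :
    covMatrix μ Z = covMatrix μ Z' := by
  have hcongr (f : (ι → ℝ) → ℝ) : ∫ ω, f (Z ω) ∂μ = ∫ ω, f (Z' ω) ∂μ :=
    integral_congr_ae (h.fun_comp f)
  ext k l
  simp only [covMatrix, of_apply]
  rw [hcongr fun z => z k * z l, hcongr fun z => z k, hcongr fun z => z l]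

theorem covMatrix_const_add [IsProbabilityMeasure μ] {Z : Ω → ι → ℝ} (b : ι → ℝ)
    (h1 : ∀ k, Integrable (fun ω => Z ω k) μ)
    (h2 : ∀ k l, Integrable (fun ω => Z ω k * Z ω l) μ) :
    covMatrix μ (fun ω => b + Z ω) = covMatrix μ Z := by
  ext k l
  simp only [covMatrix, of_apply, Pi.add_apply, add_mul, mul_add]
  rw [integral_add, integral_add, integral_add, integral_add, integral_add]
  · simp only [integral_const, integral_const_mul, integral_mul_const, probReal_univ, one_smul]
    ring
  all_goals fun_prop

theorem posSemidef_entrywiseIntegral [Fintype ι] {M : Ω → Matrix ι ι ℝ}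
    (hM : ∀ᵐ ω ∂μ, (M ω).PosSemidef)
    (hint : ∀ i j, Integrable (fun ω => M ω i j) μ) : (entrywiseIntegral μ M).PosSemidef := by
  refine .of_dotProduct_mulVec_nonneg ?_ fun x => ?_
  · ext i j
    exact integral_congr_ae (hM.mono fun ω h => h.isHermitian.apply i j)
  · have hquad : star x ⬝ᵥ (entrywiseIntegral μ M *ᵥ x) = ∫ ω, star x ⬝ᵥ (M ω *ᵥ x) ∂μ := by
      simp only [dotProduct, mulVec, entrywiseIntegral, of_apply, Finset.mul_sum]
      rw [integral_finsetSum _ fun i _ => integrable_finsetSum _ fun j _ =>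
        ((hint i j).mul_const _).const_mul _]
      refine Finset.sum_congr rfl fun i _ => ?_
      rw [integral_finsetSum _ fun j _ => ((hint i j).mul_const _).const_mul _]
      simp only [integral_const_mul, integral_mul_const]
    rw [hquad]
    exact integral_nonneg_of_ae (hM.mono fun ω h => h.dotProduct_mulVec_nonneg x)

theorem integrable_mul_transpose_apply [Fintype κ] {A : Ω → Matrix ι κ ℝ}
    (hA : ∀ k i, MemLp (fun ω => A ω k i) 2 μ) (k l : ι) :
    Integrable (fun ω => (A ω * (A ω)ᵀ) k l) μ := by
  simp only [mul_apply, transpose_apply]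
  exact integrable_finsetSum _ fun i _ => (hA k i).integrable_mul (hA l i)

theorem posSemidef_entrywiseIntegral_mul_transpose_sub [IsProbabilityMeasure μ] [Fintype ι]
    [Fintype κ] [DecidableEq κ] {A : Ω → Matrix κ ι ℝ} {B : Matrix ι κ ℝ}
    (hB : B.rank = Fintype.card κ)
    (hAB : ∀ᵐ ω ∂μ, A ω * B = 1) (hA : ∀ k i, MemLp (fun ω => A ω k i) 2 μ) :
    (entrywiseIntegral μ (fun ω => A ω * (A ω)ᵀ)
      - leastSquaresInv B * (leastSquaresInv B)ᵀ).PosSemidef := by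
  have hdiff : entrywiseIntegral μ (fun ω => A ω * (A ω)ᵀ)
        - leastSquaresInv B * (leastSquaresInv B)ᵀ
      = entrywiseIntegral μ
          (fun ω => (A ω - leastSquaresInv B) * (A ω - leastSquaresInv B)ᵀ) := by
    ext k l
    have hpt : ∀ᵐ ω ∂μ, ((A ω - leastSquaresInv B) * (A ω - leastSquaresInv B)ᵀ) k l
        = (A ω * (A ω)ᵀ) k l - (leastSquaresInv B * (leastSquaresInv B)ᵀ) k l :=
      hAB.mono fun ω h => by rw [← mul_transpose_sub_leastSquaresInv_mul_transpose hB h]; rfl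
    rw [Matrix.sub_apply, entrywiseIntegral, entrywiseIntegral, of_apply, of_apply,
      integral_congr_ae hpt, integral_sub (integrable_mul_transpose_apply hA k l)
      (integrable_const _), integral_const, probReal_univ, one_smul]
  rw [hdiff]
  exact posSemidef_entrywiseIntegral
    (ae_of_all _ fun ω => by
      simpa using posSemidef_self_mul_conjTranspose (A ω - leastSquaresInv B))
    (integrable_mul_transpose_apply fun k i => (hA k i).sub (memLp_const _))

end Moments

section LinearNoise

variable {Ω ι κ : Type*} [MeasurableSpace Ω] {μ : Measure Ω}
  {A : Ω → Matrix ι κ ℝ} {ε : Ω → κ → ℝ}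

theorem ProbabilityTheory.IndepFun.matrix_entry (hind : IndepFun (fun ω i j => A ω i j) ε μ)
    (k : ι) (i j : κ) :
    IndepFun (fun ω => A ω k i) (fun ω => ε ω j) μ :=
  hind.comp (φ := fun M : ι → κ → ℝ => M k i) (ψ := fun x : κ → ℝ => x j)
    (by fun_prop) (by fun_prop)

theorem ProbabilityTheory.IndepFun.matrix_entry_mul (hind : IndepFun (fun ω i j => A ω i j) ε μ)
    (k l : ι) (i j : κ) :
    IndepFun (fun ω => A ω k i * A ω l j) (fun ω => ε ω i * ε ω j) μ :=
  hind.comp (φ := fun M : ι → κ → ℝ => M k i * M l j) (ψ := fun x : κ → ℝ => x i * x j)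
    (by fun_prop) (by fun_prop)

theorem ProbabilityTheory.IndepFun.integrable_matrix_entry_mul
    (hind : IndepFun (fun ω i j => A ω i j) ε μ) {k : ι} {i j : κ}
    (hA : Integrable (fun ω => A ω k i) μ) (hε : Integrable (fun ω => ε ω j) μ) :
    Integrable (fun ω => A ω k i * ε ω j) μ :=
  (hind.matrix_entry k i j).integrable_mul hA hε

theorem ProbabilityTheory.IndepFun.integrable_matrix_entry_mul_mul
    (hind : IndepFun (fun ω i j => A ω i j) ε μ) {k l : ι} {i j : κ}
    (hA : Integrable (fun ω => A ω k i * A ω l j) μ)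
    (hε : Integrable (fun ω => ε ω i * ε ω j) μ) :
    Integrable (fun ω => A ω k i * A ω l j * (ε ω i * ε ω j)) μ :=
  (hind.matrix_entry_mul k l i j).integrable_mul hA hε

variable [Fintype κ]

theorem integrable_mulVec_apply (hind : IndepFun (fun ω i j => A ω i j) ε μ)
    (hA : ∀ k i, Integrable (fun ω => A ω k i) μ) (hε : ∀ i, Integrable (fun ω => ε ω i) μ)
    (k : ι) : Integrable (fun ω => (A ω *ᵥ ε ω) k) μ :=
  integrable_finsetSum _ fun i _ => hind.integrable_matrix_entry_mul (hA k i) (hε i)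

theorem integral_mulVec_apply_eq_zero (hind : IndepFun (fun ω i j => A ω i j) ε μ)
    (hA : ∀ k i, Integrable (fun ω => A ω k i) μ) (hε : ∀ i, Integrable (fun ω => ε ω i) μ)
    (hmean : ∀ i, ∫ ω, ε ω i ∂μ = 0) (k : ι) : ∫ ω, (A ω *ᵥ ε ω) k ∂μ = 0 := by
  simp only [mulVec, dotProduct]
  rw [integral_finsetSum _ fun i _ => hind.integrable_matrix_entry_mul (hA k i) (hε i)]
  refine Finset.sum_eq_zero fun i _ => ?_
  rw [(hind.matrix_entry k i i).integral_fun_mul_eq_mul_integral (hA k i).aestronglyMeasurable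
    (hε i).aestronglyMeasurable, hmean, mul_zero]

theorem integrable_mulVec_apply_mul_mulVec_apply (hind : IndepFun (fun ω i j => A ω i j) ε μ)
    (hA : ∀ k i, MemLp (fun ω => A ω k i) 2 μ) (hε : ∀ i, MemLp (fun ω => ε ω i) 2 μ)
    (k l : ι) : Integrable (fun ω => (A ω *ᵥ ε ω) k * (A ω *ᵥ ε ω) l) μ := by
  simp only [mulVec_apply_mul_mulVec_apply]
  exact integrable_finsetSum _ fun i _ => integrable_finsetSum _ fun j _ =>
    hind.integrable_matrix_entry_mul_mul ((hA k i).integrable_mul (hA l j))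
      ((hε i).integrable_mul (hε j))

theorem integral_mulVec_apply_mul_mulVec_apply [DecidableEq κ] {σ : ℝ}
    (hind : IndepFun (fun ω i j => A ω i j) ε μ)
    (hA : ∀ k i, MemLp (fun ω => A ω k i) 2 μ) (hε : ∀ i, MemLp (fun ω => ε ω i) 2 μ)
    (hcov : ∀ i j, ∫ ω, ε ω i * ε ω j ∂μ = if i = j then σ ^ 2 else 0) (k l : ι) :
    ∫ ω, (A ω *ᵥ ε ω) k * (A ω *ᵥ ε ω) l ∂μ = σ ^ 2 * ∫ ω, (A ω * (A ω)ᵀ) k l ∂μ := by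
  have hAA : ∀ i j, Integrable (fun ω => A ω k i * A ω l j) μ :=
    fun i j => (hA k i).integrable_mul (hA l j)
  have hterm : ∀ i j, ∫ ω, A ω k i * A ω l j * (ε ω i * ε ω j) ∂μ
      = (∫ ω, A ω k i * A ω l j ∂μ) * if i = j then σ ^ 2 else 0 := fun i j => by
    rw [(hind.matrix_entry_mul k l i j).integral_fun_mul_eq_mul_integral
      (hAA i j).aestronglyMeasurable ((hε i).integrable_mul (hε j)).aestronglyMeasurable, hcov]
  simp only [mulVec_apply_mul_mulVec_apply, mul_apply, transpose_apply]
  rw [integral_finsetSum _ fun i _ => integrable_finsetSum _ fun j _ =>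
      hind.integrable_matrix_entry_mul_mul (hAA i j) ((hε i).integrable_mul (hε j)),
    integral_finsetSum _ fun i _ => hAA i i, Finset.mul_sum]
  refine Finset.sum_congr rfl fun i _ => ?_
  rw [integral_finsetSum _ fun j _ =>
    hind.integrable_matrix_entry_mul_mul (hAA i j) ((hε i).integrable_mul (hε j))]
  simp [hterm, mul_comm]

theorem covMatrix_const_add_mulVec [IsProbabilityMeasure μ] [Fintype ι] [DecidableEq κ] {σ : ℝ}
    (hind : IndepFun (fun ω i j => A ω i j) ε μ)
    (hA : ∀ k i, MemLp (fun ω => A ω k i) 2 μ) (hε : ∀ i, MemLp (fun ω => ε ω i) 2 μ)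
    (hmean : ∀ i, ∫ ω, ε ω i ∂μ = 0)
    (hcov : ∀ i j, ∫ ω, ε ω i * ε ω j ∂μ = if i = j then σ ^ 2 else 0) (b : ι → ℝ) :
    covMatrix μ (fun ω => b + A ω *ᵥ ε ω)
      = σ ^ 2 • entrywiseIntegral μ (fun ω => A ω * (A ω)ᵀ) := by
  have hA1 : ∀ k i, Integrable (fun ω => A ω k i) μ := fun k i => (hA k i).integrable one_le_two
  have hε1 : ∀ i, Integrable (fun ω => ε ω i) μ := fun i => (hε i).integrable one_le_two
  rw [covMatrix_const_add b (integrable_mulVec_apply hind hA1 hε1)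
    (integrable_mulVec_apply_mul_mulVec_apply hind hA hε)]
  ext k l
  simp [covMatrix, entrywiseIntegral, integral_mulVec_apply_eq_zero hind hA1 hε1 hmean,
    integral_mulVec_apply_mul_mulVec_apply hind hA hε hcov]

theorem covMatrix_const_add_const_mulVec [IsProbabilityMeasure μ] [Fintype ι] [DecidableEq κ]
    {σ : ℝ} (W : Matrix ι κ ℝ) (hε : ∀ i, MemLp (fun ω => ε ω i) 2 μ)
    (hmean : ∀ i, ∫ ω, ε ω i ∂μ = 0)
    (hcov : ∀ i j, ∫ ω, ε ω i * ε ω j ∂μ = if i = j then σ ^ 2 else 0) (b : ι → ℝ) :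
    covMatrix μ (fun ω => b + W *ᵥ ε ω) = σ ^ 2 • (W * Wᵀ) := by
  rw [covMatrix_const_add_mulVec (A := fun _ => W) (indepFun_const_left _ _)
    (fun _ _ => memLp_const _) hε hmean hcov]
  ext k l
  simp [entrywiseIntegral]

end LinearNoise

theorem total_variance_loewner_rank_preserved_general
    {n p r : ℕ} (X : Matrix (Fin n) (Fin p) ℝ) (hX : X.rank = p)
    (Xd : Matrix (Fin p) (Fin n) ℝ) (hXd : Xd = (Xᵀ * X)⁻¹ * Xᵀ)
    {Ω : Type*} [MeasurableSpace Ω] (μ : Measure Ω) [IsProbabilityMeasure μ]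
    (S : Ω → Matrix (Fin r) (Fin n) ℝ)
    (Y : Ω → Matrix (Fin p) (Fin r) ℝ)
    (hp1 : ∀ ω, (S ω * X) * Y ω * (S ω * X) = S ω * X)
    (hp3 : ∀ ω, ((S ω * X) * Y ω)ᵀ = (S ω * X) * Y ω)
    (hrank : ∀ᵐ ω ∂μ, (S ω * X).rank = p)
    (β₀ : Fin p → ℝ) (σ : ℝ) (ε : Ω → Fin n → ℝ)
    (hindep : ProbabilityTheory.IndepFun ε
      ((fun ω i j => S ω i j) : Ω → Fin r → Fin n → ℝ) μ)
    (hεL2 : ∀ i, MemLp (fun ω => ε ω i) 2 μ)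
    (hεmean : ∀ i, ∫ ω, ε ω i ∂μ = 0)
    (hεcov : ∀ i j, ∫ ω, ε ω i * ε ω j ∂μ = if i = j then σ ^ 2 else 0)
    (hYSL2 : ∀ i j, MemLp (fun ω => (Y ω * S ω) i j) 2 μ)
    (βtilde : Ω → Fin p → ℝ)
    (hβtilde : ∀ ω, βtilde ω = Y ω *ᵥ (S ω *ᵥ (X *ᵥ β₀ + ε ω)))
    (βhat : Ω → Fin p → ℝ)
    (hβhat : ∀ ω, βhat ω = Xd *ᵥ (X *ᵥ β₀ + ε ω))
    (Vt : Matrix (Fin p) (Fin p) ℝ)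
    (hVt : ∀ k l, Vt k l = (∫ ω, βtilde ω k * βtilde ω l ∂μ) -
      (∫ ω, βtilde ω k ∂μ) * (∫ ω, βtilde ω l ∂μ))
    (Vh : Matrix (Fin p) (Fin p) ℝ)
    (hVh : ∀ k l, Vh k l = (∫ ω, βhat ω k * βhat ω l ∂μ) -
      (∫ ω, βhat ω k ∂μ) * (∫ ω, βhat ω l ∂μ)) :
    (Vt - Vh).PosSemidef ∧ Vh.trace ≤ Vt.trace := by
  have hXd' : Xd = leastSquaresInv X := hXd
  have hX' : X.rank = Fintype.card (Fin p) := by rw [hX, Fintype.card_fin]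
  have hXdX : Xd * X = 1 := hXd' ▸ leastSquaresInv_mul_self hX'
  set G : Matrix (Fin r) (Fin n) ℝ → Matrix (Fin p) (Fin n) ℝ :=
    fun M => leastSquaresInv (M * X) * M with hG
  have hSX : ∀ᵐ ω ∂μ, (S ω * X).rank = Fintype.card (Fin p) := by simpa using hrank
  have hYS : ∀ᵐ ω ∂μ, Y ω * S ω = G (S ω) := hSX.mono fun ω h => by
    rw [eq_leastSquaresInv_of_mul_mul_self h (hp1 ω) (hp3 ω)]
  have hGX : ∀ᵐ ω ∂μ, G (S ω) * X = 1 := hSX.mono fun ω h => by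
    rw [hG, Matrix.mul_assoc, leastSquaresInv_mul_self h]
  have hG2 : ∀ k i, MemLp (fun ω => G (S ω) k i) 2 μ := fun k i =>
    (hYSL2 k i).ae_eq (hYS.mono fun ω h => by rw [h])
  -- `Y` need not be measurable; independence from `ε` is carried by `G ∘ S` instead.
  have hGind : IndepFun (fun ω k i => G (S ω) k i) ε μ :=
    hindep.symm.comp (measurable_leastSquaresInv_mul_mul X) measurable_id
  have hVt' : Vt = σ ^ 2 • entrywiseIntegral μ (fun ω => G (S ω) * (G (S ω))ᵀ) := by
    have hβ : βtilde =ᵐ[μ] fun ω => β₀ + G (S ω) *ᵥ ε ω := (hYS.and hGX).mono fun ω h => by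
      rw [hβtilde, mulVec_mulVec, h.1, mulVec_add, mulVec_mulVec, h.2, one_mulVec]
    rw [show Vt = covMatrix μ βtilde from ext hVt, covMatrix_congr_ae hβ,
      covMatrix_const_add_mulVec hGind hG2 hεL2 hεmean hεcov]
  have hVh' : Vh = σ ^ 2 • (Xd * Xdᵀ) := by
    have hβ : βhat = fun ω => β₀ + Xd *ᵥ ε ω := funext fun ω => by
      rw [hβhat, mulVec_add, mulVec_mulVec, hXdX, one_mulVec]
    rw [show Vh = covMatrix μ βhat from ext hVh, hβ,
      covMatrix_const_add_const_mulVec Xd hεL2 hεmean hεcov]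
  have hpsd : (Vt - Vh).PosSemidef := by
    rw [hVt', hVh', ← smul_sub, hXd']
    exact (posSemidef_entrywiseIntegral_mul_transpose_sub hX' hGX hG2).smul (sq_nonneg σ)
  exact ⟨hpsd, by linarith [hpsd.trace_nonneg, trace_sub Vt Vh]⟩

/-- Loewner ordering of total variances under rank preservation:
if `rank(S(ω)X) = p` almost surely and `ε` (mean zero, covariance `σ²I`) is
independent of `S`, then the covariance matrix of the sketched solution
`β̃ = Y S (Xβ₀ + ε)` dominates that of the exact solution `β̂ = X†(Xβ₀ + ε)` in the
Loewner order, and in particular has at least as large a trace. -/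
theorem total_variance_loewner_rank_preserved
    {n p r : ℕ} (X : Matrix (Fin n) (Fin p) ℝ) (hX : X.rank = p)
    (hpr : p ≤ r) (hrn : r ≤ n)
    (Xd : Matrix (Fin p) (Fin n) ℝ) (hXd : Xd = (Xᵀ * X)⁻¹ * Xᵀ)
    {Ω : Type*} [MeasurableSpace Ω] (μ : Measure Ω) [IsProbabilityMeasure μ]
    (S : Ω → Matrix (Fin r) (Fin n) ℝ)
    (Y : Ω → Matrix (Fin p) (Fin r) ℝ)
    (hp1 : ∀ ω, (S ω * X) * Y ω * (S ω * X) = S ω * X)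
    (hp2 : ∀ ω, Y ω * ((S ω * X) * Y ω) = Y ω)
    (hp3 : ∀ ω, ((S ω * X) * Y ω)ᵀ = (S ω * X) * Y ω)
    (hp4 : ∀ ω, (Y ω * (S ω * X))ᵀ = Y ω * (S ω * X))
    (hrank : ∀ᵐ ω ∂μ, (S ω * X).rank = p)
    (β₀ : Fin p → ℝ) (σ : ℝ) (hσ : 0 < σ) (ε : Ω → Fin n → ℝ)
    (hindep : ProbabilityTheory.IndepFun ε
      ((fun ω i j => S ω i j) : Ω → Fin r → Fin n → ℝ) μ)
    (hεL2 : ∀ i, MemLp (fun ω => ε ω i) 2 μ)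
    (hεmean : ∀ i, ∫ ω, ε ω i ∂μ = 0)
    (hεcov : ∀ i j, ∫ ω, ε ω i * ε ω j ∂μ = if i = j then σ ^ 2 else 0)
    (hYSL2 : ∀ i j, MemLp (fun ω => (Y ω * S ω) i j) 2 μ)
    (βtilde : Ω → Fin p → ℝ)
    (hβtilde : ∀ ω, βtilde ω = Y ω *ᵥ (S ω *ᵥ (X *ᵥ β₀ + ε ω)))
    (βhat : Ω → Fin p → ℝ)
    (hβhat : ∀ ω, βhat ω = Xd *ᵥ (X *ᵥ β₀ + ε ω))
    (Vt : Matrix (Fin p) (Fin p) ℝ)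
    (hVt : ∀ k l, Vt k l = (∫ ω, βtilde ω k * βtilde ω l ∂μ) -
      (∫ ω, βtilde ω k ∂μ) * (∫ ω, βtilde ω l ∂μ))
    (Vh : Matrix (Fin p) (Fin p) ℝ)
    (hVh : ∀ k l, Vh k l = (∫ ω, βhat ω k * βhat ω l ∂μ) -
      (∫ ω, βhat ω k ∂μ) * (∫ ω, βhat ω l ∂μ)) :
    (Vt - Vh).PosSemidef ∧ Vh.trace ≤ Vt.trace :=
  total_variance_loewner_rank_preserved_general X hX Xd hXd μ S Y hp1 hp3 hrank β₀ σ ε hindep hεL2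
    hεmean hεcov hYSL2 βtilde hβtilde βhat hβhat Vt hVt Vh hVh
end
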